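/- arXiv:1205.5154 — 4 statements merged into one kernel-verified Lean document; each statement's English description precedes it below -/
import Mathlib

section
/- Support function property of the adapted Levi polynomial, real-part version: let f : ℝ × ℂⁿ → ℝ be smooth with second-order Taylor expansion f₂(x₀, z) = x₀·ℓ(x₀,z) + 2 Re P(z) + L(z, z̄) at the origin, where ℓ is real-linear, P is a homogeneous holomorphic polynomial of degree 2, and L is a positive-definite Hermitian form. Define Λ(z₀, z) = z₀ − 2i P(z) and let bM = {Im z₀ = f(Re z₀, z)}. Then there is a neighborhood U of 0 in ℂ^{n+1} such that the only point q ∈ bM ∩ U with Λ(q) = 0 is q = 0. -/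
open Complex Filter

lemma levi_lower_bound {n : ℕ} (L : (Fin n → ℂ) → ℝ)
    (A : Fin n → Fin n → ℂ)
    (hA : ∀ z, (L z : ℂ) = ∑ j, ∑ k, A j k * z j * starRingEnd ℂ (z k))
    (hpos : ∀ z, z ≠ 0 → 0 < L z) :
    ∃ c > 0, ∀ z, c * ‖z‖ ^ 2 ≤ L z := by
  have hL0 : L 0 = 0 := by
    have h := hA 0
    simp at h
    exact_mod_cast h
  have hcont : Continuous L := by
    have hEq : L = fun z => (∑ j, ∑ k, A j k * z j * starRingEnd ℂ (z k)).re := by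
      funext z; rw [← hA]; simp
    rw [hEq]
    refine Complex.continuous_re.comp ?_
    refine continuous_finset_sum _ fun j _ => continuous_finset_sum _ fun k _ => ?_
    exact ((continuous_const.mul (continuous_apply j)).mul
      (continuous_star.comp (continuous_apply k)))
  have hhom : ∀ (t : ℝ) (z : Fin n → ℂ), L (t • z) = t ^ 2 * L z := by
    intro t z
    have h : ((L (t • z) : ℂ)) = (t : ℂ) ^ 2 * (L z : ℂ) := by
      rw [hA, hA, Finset.mul_sum]
      refine Finset.sum_congr rfl fun j _ => ?_
      rw [Finset.mul_sum]
      refine Finset.sum_congr rfl fun k _ => ?_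
      simp [Pi.smul_apply, Complex.real_smul, map_mul, Complex.conj_ofReal]
      ring
    have h2 : ((L (t • z) : ℂ)) = ((t ^ 2 * L z : ℝ) : ℂ) := by push_cast; exact h
    exact_mod_cast h2
  rcases Nat.eq_zero_or_pos n with hn | hn
  · refine ⟨1, one_pos, fun z => ?_⟩
    subst hn
    have hz : z = 0 := Subsingleton.elim z 0
    rw [hz, hL0, norm_zero]
    norm_num
  · haveI : Nontrivial (Fin n → ℂ) := by
      refine ⟨0, Function.const _ 1, fun h => ?_⟩
      have h1 := congrFun h ⟨0, hn⟩
      simp [Function.const] at h1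
    obtain ⟨w, hw, hwmin⟩ := (isCompact_sphere (0 : Fin n → ℂ) 1).exists_isMinOn
      (NormedSpace.sphere_nonempty.mpr zero_le_one) hcont.continuousOn
    have hwne : w ≠ 0 := by
      intro h
      rw [mem_sphere_zero_iff_norm] at hw
      simp [h] at hw
    have hc : 0 < L w := hpos w hwne
    refine ⟨L w, hc, fun z => ?_⟩
    by_cases hz : z = 0
    · simp [hz, hL0]
    · have hnz : (0:ℝ) < ‖z‖ := norm_pos_iff.mpr hz
      have hmem : ‖z‖⁻¹ • z ∈ Metric.sphere (0 : Fin n → ℂ) 1 := by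
        rw [mem_sphere_zero_iff_norm, norm_smul]
        simp [abs_of_pos, hnz.le, hnz.ne']
      have heq : L z = ‖z‖ ^ 2 * L (‖z‖⁻¹ • z) := by
        rw [hhom]
        field_simp
      have h2 : L w ≤ L (‖z‖⁻¹ • z) := hwmin hmem
      calc L w * ‖z‖ ^ 2 ≤ L (‖z‖⁻¹ • z) * ‖z‖ ^ 2 :=
            mul_le_mul_of_nonneg_right h2 (sq_nonneg _)
        _ = L z := by rw [heq]; ring

set_option maxHeartbeats 2000000 in
/-- Support function property of the adapted Levi polynomial: if the smooth real
function `f` has second-order Taylor expansion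
`f₂(x₀,z) = x₀·ℓ(x₀,z) + 2 Re P(z) + L(z,z̄)` at `0`, with `ℓ` real-linear, `P` a
homogeneous holomorphic polynomial of degree 2 and `L` a positive-definite
Hermitian form, then on a sufficiently small neighborhood of `0` the only zero of
the adapted Levi polynomial `Λ(z₀,z) = z₀ − 2iP(z)` on `bM = {Im z₀ = f(Re z₀,z)}`
is the origin. -/
theorem adapted_levi_support_function {n : ℕ}
    (f : ℝ × (Fin n → ℂ) → ℝ) (hf : ContDiff ℝ (⊤ : ℕ∞) f)
    (ℓ : ℝ × (Fin n → ℂ) →ₗ[ℝ] ℝ)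
    (P : (Fin n → ℂ) → ℂ)
    (hP : ∃ c : Fin n → Fin n → ℂ, ∀ z, P z = ∑ j, ∑ k, c j k * z j * z k)
    (L : (Fin n → ℂ) → ℝ)
    (hL : ∃ A : Fin n → Fin n → ℂ,
      (∀ j k, A j k = starRingEnd ℂ (A k j)) ∧
      (∀ z, (L z : ℂ) = ∑ j, ∑ k, A j k * z j * starRingEnd ℂ (z k)) ∧
      (∀ z, z ≠ 0 → 0 < L z))
    (hTaylor : ∃ C δ : ℝ, 0 < δ ∧ ∀ x₀ : ℝ, ∀ z : Fin n → ℂ, ‖(x₀, z)‖ < δ →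
      |f (x₀, z) - (x₀ * ℓ (x₀, z) + 2 * (P z).re + L z)| ≤ C * ‖(x₀, z)‖ ^ 3) :
    ∃ U ∈ nhds (0 : ℂ × (Fin n → ℂ)), ∀ q ∈ U,
      q.1.im = f (q.1.re, q.2) → q.1 - 2 * Complex.I * P q.2 = 0 → q = 0 := by
  obtain ⟨A, _hherm, hAeq, hApos⟩ := hL
  obtain ⟨cf, hcf⟩ := hP
  obtain ⟨C, δ, hδ, hTay⟩ := hTaylor
  obtain ⟨c0, hc0, hlow⟩ := levi_lower_bound L A hAeq hApos
  set Cp : ℝ := ∑ j, ∑ k, ‖cf j k‖ with hCpdef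
  have hCp : 0 ≤ Cp := Finset.sum_nonneg fun j _ =>
    Finset.sum_nonneg fun k _ => norm_nonneg _
  have hPbound : ∀ z : Fin n → ℂ, ‖P z‖ ≤ Cp * ‖z‖ ^ 2 := by
    intro z
    rw [hcf]
    calc ‖∑ j, ∑ k, cf j k * z j * z k‖
        ≤ ∑ j, ‖∑ k, cf j k * z j * z k‖ := norm_sum_le _ _
      _ ≤ ∑ j, ∑ k, ‖cf j k * z j * z k‖ :=
          Finset.sum_le_sum fun j _ => norm_sum_le _ _
      _ ≤ ∑ j, ∑ k, ‖cf j k‖ * ‖z‖ ^ 2 := by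
          refine Finset.sum_le_sum fun j _ => Finset.sum_le_sum fun k _ => ?_
          rw [norm_mul, norm_mul, sq]
          have h1 : ‖z j‖ ≤ ‖z‖ := norm_le_pi_norm z j
          have h2 : ‖z k‖ ≤ ‖z‖ := norm_le_pi_norm z k
          have hc := norm_nonneg (cf j k)
          calc ‖cf j k‖ * ‖z j‖ * ‖z k‖ = ‖cf j k‖ * (‖z j‖ * ‖z k‖) := by ring
            _ ≤ ‖cf j k‖ * (‖z‖ * ‖z‖) := mul_le_mul_of_nonneg_left
                (mul_le_mul h1 h2 (norm_nonneg _) (norm_nonneg z)) hc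
      _ = Cp * ‖z‖ ^ 2 := by rw [hCpdef, Finset.sum_mul]; simp [Finset.sum_mul]
  have hP0 : P 0 = 0 := by simp [hcf]
  set ℓ' := LinearMap.toContinuousLinearMap ℓ with hℓ'def
  have hℓb : ∀ p : ℝ × (Fin n → ℂ), |ℓ p| ≤ ‖ℓ'‖ * ‖p‖ := fun p => ℓ'.le_opNorm p
  set C0 : ℝ := max C 0 with hC0def
  have hC0 : 0 ≤ C0 := le_max_right _ _
  set C' : ℝ := C0 + 2 * Cp * ‖ℓ'‖ + 1 with hC'def
  have hC' : 0 < C' := by positivity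
  set r : ℝ := min δ (min 1 (min (1 / (2 * Cp + 1)) (c0 / C'))) with hrdef
  have hr : 0 < r := by
    refine lt_min hδ (lt_min one_pos (lt_min (by positivity) (by positivity)))
  refine ⟨Metric.ball 0 r, Metric.ball_mem_nhds 0 hr, ?_⟩
  rintro ⟨z₀, z⟩ hq hbM hΛ
  simp only at hbM hΛ
  have hz₀ : z₀ = 2 * Complex.I * P z := by linear_combination hΛ
  -- norms
  have hqn : ‖z‖ < r := by
    have h := mem_ball_zero_iff.mp hq
    exact lt_of_le_of_lt (norm_snd_le (z₀, z)) h
  have hz1 : ‖z‖ < 1 := lt_of_lt_of_le hqn (le_trans (min_le_right _ _) (min_le_left _ _))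
  have hzδ : ‖z‖ < δ := lt_of_lt_of_le hqn (min_le_left _ _)
  have hzCp : ‖z‖ < 1 / (2 * Cp + 1) := lt_of_lt_of_le hqn
    (le_trans (min_le_right _ _) (le_trans (min_le_right _ _) (min_le_left _ _)))
  have hzc0 : ‖z‖ < c0 / C' := lt_of_lt_of_le hqn
    (le_trans (min_le_right _ _) (le_trans (min_le_right _ _) (min_le_right _ _)))
  set x₀ : ℝ := z₀.re with hx₀def
  have hx₀ : |x₀| ≤ 2 * Cp * ‖z‖ ^ 2 := by
    have : x₀ = -2 * (P z).im := by rw [hx₀def, hz₀]; simp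
    rw [this]
    have him : |(P z).im| ≤ ‖P z‖ := Complex.abs_im_le_norm _
    calc |(-2) * (P z).im| = 2 * |(P z).im| := by rw [abs_mul]; norm_num
      _ ≤ 2 * ‖P z‖ := by linarith
      _ ≤ 2 * (Cp * ‖z‖ ^ 2) := by linarith [hPbound z]
      _ = 2 * Cp * ‖z‖ ^ 2 := by ring
  have hxz : |x₀| ≤ ‖z‖ := by
    calc |x₀| ≤ 2 * Cp * ‖z‖ ^ 2 := hx₀
      _ = (2 * Cp * ‖z‖) * ‖z‖ := by ring
      _ ≤ 1 * ‖z‖ := by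
          refine mul_le_mul_of_nonneg_right ?_ (norm_nonneg _)
          have h1 : (2 * Cp + 1) * ‖z‖ ≤ 1 := by
            rw [div_eq_inv_mul] at hzCp
            have : 0 < 2 * Cp + 1 := by positivity
            calc (2 * Cp + 1) * ‖z‖ ≤ (2 * Cp + 1) * ((2 * Cp + 1)⁻¹ * 1) :=
                  mul_le_mul_of_nonneg_left hzCp.le this.le
              _ = 1 := by field_simp
          nlinarith [norm_nonneg z]
      _ = ‖z‖ := one_mul _
  have hN : ‖((x₀, z) : ℝ × (Fin n → ℂ))‖ ≤ ‖z‖ := by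
    rw [Prod.norm_def]
    exact max_le (by simpa using hxz) le_rfl
  have hNδ : ‖((x₀, z) : ℝ × (Fin n → ℂ))‖ < δ := lt_of_le_of_lt hN hzδ
  have hfval : f (x₀, z) = 2 * (P z).re := by
    rw [← hbM, hz₀]
    simp
  have hTayApp := hTay x₀ z hNδ
  rw [hfval] at hTayApp
  have habs : |x₀ * ℓ (x₀, z) + L z| ≤ C0 * ‖z‖ ^ 3 := by
    have h1 : |2 * (P z).re - (x₀ * ℓ (x₀, z) + 2 * (P z).re + L z)|
        = |x₀ * ℓ (x₀, z) + L z| := by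
      rw [show 2 * (P z).re - (x₀ * ℓ (x₀, z) + 2 * (P z).re + L z)
          = -(x₀ * ℓ (x₀, z) + L z) by ring, abs_neg]
    rw [h1] at hTayApp
    have hNn : (0:ℝ) ≤ ‖((x₀, z) : ℝ × (Fin n → ℂ))‖ := norm_nonneg _
    calc |x₀ * ℓ (x₀, z) + L z| ≤ C * ‖((x₀, z) : ℝ × (Fin n → ℂ))‖ ^ 3 := hTayApp
      _ ≤ C0 * ‖((x₀, z) : ℝ × (Fin n → ℂ))‖ ^ 3 :=
          mul_le_mul_of_nonneg_right (le_max_left _ _) (by positivity)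
      _ ≤ C0 * ‖z‖ ^ 3 := by
          refine mul_le_mul_of_nonneg_left ?_ hC0
          exact pow_le_pow_left₀ hNn hN 3
  have hLz : L z ≤ C' * ‖z‖ ^ 3 := by
    have h2 : |x₀ * ℓ (x₀, z)| ≤ 2 * Cp * ‖ℓ'‖ * ‖z‖ ^ 3 := by
      rw [abs_mul]
      calc |x₀| * |ℓ (x₀, z)| ≤ (2 * Cp * ‖z‖ ^ 2) * (‖ℓ'‖ * ‖z‖) := by
            refine mul_le_mul hx₀ ?_ (abs_nonneg _) (by positivity)
            calc |ℓ (x₀, z)| ≤ ‖ℓ'‖ * ‖((x₀, z) : ℝ × (Fin n → ℂ))‖ := hℓb _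
              _ ≤ ‖ℓ'‖ * ‖z‖ := mul_le_mul_of_nonneg_left hN (norm_nonneg _)
        _ = 2 * Cp * ‖ℓ'‖ * ‖z‖ ^ 3 := by ring
    have h3 : L z ≤ |x₀ * ℓ (x₀, z) + L z| + |x₀ * ℓ (x₀, z)| := by
      have := abs_add_le (x₀ * ℓ (x₀, z) + L z) (-(x₀ * ℓ (x₀, z)))
      simp at this
      calc L z ≤ |L z| := le_abs_self _
        _ = |x₀ * ℓ (x₀, z) + L z + -(x₀ * ℓ (x₀, z))| := by ring_nf
        _ ≤ |x₀ * ℓ (x₀, z) + L z| + |(-(x₀ * ℓ (x₀, z)))| := abs_add_le _ _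
        _ = |x₀ * ℓ (x₀, z) + L z| + |x₀ * ℓ (x₀, z)| := by rw [abs_neg]
    have hz3 : (0:ℝ) ≤ ‖z‖ ^ 3 := by positivity
    calc L z ≤ C0 * ‖z‖ ^ 3 + 2 * Cp * ‖ℓ'‖ * ‖z‖ ^ 3 := by linarith
      _ ≤ C' * ‖z‖ ^ 3 := by rw [hC'def]; nlinarith
  have hzzero : z = 0 := by
    by_contra hzne
    have hnz : (0:ℝ) < ‖z‖ := norm_pos_iff.mpr hzne
    have h4 : c0 * ‖z‖ ^ 2 ≤ C' * ‖z‖ ^ 3 := le_trans (hlow z) hLz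
    have h4' : c0 * ‖z‖ ^ 2 ≤ (C' * ‖z‖) * ‖z‖ ^ 2 := by
      have hr : (C' * ‖z‖) * ‖z‖ ^ 2 = C' * ‖z‖ ^ 3 := by ring
      linarith
    have h5 : c0 ≤ C' * ‖z‖ := le_of_mul_le_mul_right h4' (pow_pos hnz 2)
    have h6 : ‖z‖ < c0 / C' := hzc0
    rw [lt_div_iff₀ hC'] at h6
    nlinarith
  have hz₀zero : z₀ = 0 := by rw [hz₀, hzzero, hP0]; ring
  simp [hz₀zero, hzzero]
end

section
/- Positivity of the imaginary part of the adapted Levi polynomial on the pseudoconvex side: with f, P, L, Λ as above, set M = {Im z₀ > f(Re z₀, z)}. Then there is a neighborhood U of 0 such that for every q ∈ M ∩ U with Re Λ(q) = 0 one has Im Λ(q) > 0. Consequently Λ restricted to M ∩ U omits the closed negative imaginary axis {w ∈ ℂ : Re w = 0, Im w ≤ 0}, so a branch of log Λ is well-defined on M ∩ U. -/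
open Complex Filter

private lemma quad_lower {n : ℕ} (L : (Fin n → ℂ) → ℝ)
    (hcont : Continuous L)
    (hhom : ∀ (t : ℝ) z, L (t • z) = t ^ 2 * L z)
    (hpos : ∀ z, z ≠ 0 → 0 < L z) :
    ∃ c > 0, ∀ z, c * ‖z‖ ^ 2 ≤ L z := by
  rcases Nat.eq_zero_or_pos n with hn | hn
  · refine ⟨1, one_pos, fun z => ?_⟩
    subst hn
    have hz : z = 0 := Subsingleton.elim _ _
    have h0 : L 0 = 0 := by
      have := hhom 0 0
      simpa using this
    rw [hz, h0, norm_zero]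
    norm_num
  · haveI : Nonempty (Fin n) := ⟨⟨0, hn⟩⟩
    haveI : Nontrivial (Fin n → ℂ) := inferInstance
    have hsph : (Metric.sphere (0 : Fin n → ℂ) 1).Nonempty :=
      NormedSpace.sphere_nonempty.mpr zero_le_one
    obtain ⟨u, hu, hmin⟩ := (isCompact_sphere (0 : Fin n → ℂ) 1).exists_isMinOn hsph
      hcont.continuousOn
    have hu1 : ‖u‖ = 1 := by simpa using hu
    have hune : u ≠ 0 := by
      intro h; rw [h] at hu1; simp at hu1
    refine ⟨L u, hpos u hune, fun z => ?_⟩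
    rcases eq_or_ne z 0 with rfl | hz
    · have h0 : L 0 = 0 := by simpa using hhom 0 0
      simp [h0]
    · have hnz : ‖z‖ ≠ 0 := norm_ne_zero_iff.mpr hz
      have hmem : (‖z‖⁻¹ • z) ∈ Metric.sphere (0 : Fin n → ℂ) 1 := by
        simp [norm_smul, _root_.abs_of_nonneg (inv_nonneg.mpr (norm_nonneg z)),
          inv_mul_cancel₀ hnz]
      have h1 : L u ≤ L (‖z‖⁻¹ • z) := hmin hmem
      have h2 : L (‖z‖⁻¹ • z) = (‖z‖⁻¹) ^ 2 * L z := hhom _ _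
      have hzpos : (0:ℝ) < ‖z‖ := lt_of_le_of_ne (norm_nonneg z) (Ne.symm hnz)
      rw [h2] at h1
      have := mul_le_mul_of_nonneg_left h1 (le_of_lt (pow_pos hzpos 2))
      calc L u * ‖z‖ ^ 2 = ‖z‖ ^ 2 * L u := by ring
        _ ≤ ‖z‖ ^ 2 * ((‖z‖⁻¹) ^ 2 * L z) := this
        _ = L z := by field_simp


private lemma P_bound {n : ℕ} (P : (Fin n → ℂ) → ℂ) (c : Fin n → Fin n → ℂ)
    (hc : ∀ z, P z = ∑ j, ∑ k, c j k * z j * z k) :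
    ∃ K : ℝ, 0 ≤ K ∧ ∀ z, ‖P z‖ ≤ K * ‖z‖ ^ 2 := by
  refine ⟨∑ j, ∑ k, ‖c j k‖,
    Finset.sum_nonneg fun j _ => Finset.sum_nonneg fun k _ => norm_nonneg _, fun z => ?_⟩
  rw [hc]
  calc ‖∑ j, ∑ k, c j k * z j * z k‖ ≤ ∑ j, ‖∑ k, c j k * z j * z k‖ :=
        norm_sum_le _ _
    _ ≤ ∑ j, ∑ k, ‖c j k * z j * z k‖ :=
        Finset.sum_le_sum fun j _ => norm_sum_le _ _
    _ ≤ ∑ j, ∑ k, ‖c j k‖ * ‖z‖ ^ 2 := by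
        refine Finset.sum_le_sum fun j _ => Finset.sum_le_sum fun k _ => ?_
        rw [norm_mul, norm_mul, pow_two, ← mul_assoc]
        have h1 : ‖z j‖ ≤ ‖z‖ := norm_le_pi_norm z j
        have h2 : ‖z k‖ ≤ ‖z‖ := norm_le_pi_norm z k
        have h3 : (0:ℝ) ≤ ‖c j k‖ := norm_nonneg _
        have h4 : (0:ℝ) ≤ ‖z j‖ := norm_nonneg _
        have h5 : (0:ℝ) ≤ ‖z k‖ := norm_nonneg _
        nlinarith [mul_le_mul h1 h2 h5 (le_trans h4 h1),
          mul_le_mul_of_nonneg_left (mul_le_mul h1 h2 h5 (le_trans h4 h1)) h3]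
    _ = (∑ j, ∑ k, ‖c j k‖) * ‖z‖ ^ 2 := by
        rw [Finset.sum_mul]
        exact Finset.sum_congr rfl fun j _ => (Finset.sum_mul _ _ _).symm

private lemma L_cont {n : ℕ} (L : (Fin n → ℂ) → ℝ) (A : Fin n → Fin n → ℂ)
    (hA : ∀ z, (L z : ℂ) = ∑ j, ∑ k, A j k * z j * starRingEnd ℂ (z k)) :
    Continuous L := by
  have hfun : L = fun z => (∑ j, ∑ k, A j k * z j * starRingEnd ℂ (z k)).re := by
    funext z
    rw [← hA z, Complex.ofReal_re]
  rw [hfun]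
  continuity

private lemma L_hom {n : ℕ} (L : (Fin n → ℂ) → ℝ) (A : Fin n → Fin n → ℂ)
    (hA : ∀ z, (L z : ℂ) = ∑ j, ∑ k, A j k * z j * starRingEnd ℂ (z k)) :
    ∀ (t : ℝ) z, L (t • z) = t ^ 2 * L z := by
  intro t z
  have : ((L (t • z) : ℂ)) = ((t ^ 2 * L z : ℝ) : ℂ) := by
    rw [hA]
    push_cast
    rw [hA, Finset.mul_sum]
    refine Finset.sum_congr rfl fun j _ => ?_
    rw [Finset.mul_sum]
    refine Finset.sum_congr rfl fun k _ => ?_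
    simp [Pi.smul_apply, smul_eq_mul, map_mul, Complex.conj_ofReal]
    ring
  exact_mod_cast this

set_option maxHeartbeats 1000000 in
/-- Positivity of the imaginary part of the adapted Levi polynomial on the
pseudoconvex side: with `f`, `ℓ`, `P`, `L` as in the second-order expansion
`f₂(x₀,z) = x₀·ℓ(x₀,z) + 2 Re P(z) + L(z,z̄)` and `Λ(z₀,z) = z₀ − 2iP(z)`, on a
small neighborhood `U` of `0` every `q ∈ M = {Im z₀ > f(Re z₀,z)}` with
`Re Λ(q) = 0` satisfies `Im Λ(q) > 0`; hence `Λ` on `M ∩ U` omits the closed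
negative imaginary axis and a branch of `log Λ` is well defined there. -/
theorem adapted_levi_omits_negative_axis {n : ℕ}
    (f : ℝ × (Fin n → ℂ) → ℝ) (hf : ContDiff ℝ (⊤ : ℕ∞) f)
    (ℓ : ℝ × (Fin n → ℂ) →ₗ[ℝ] ℝ)
    (P : (Fin n → ℂ) → ℂ)
    (hP : ∃ c : Fin n → Fin n → ℂ, ∀ z, P z = ∑ j, ∑ k, c j k * z j * z k)
    (L : (Fin n → ℂ) → ℝ)
    (hL : ∃ A : Fin n → Fin n → ℂ,
      (∀ j k, A j k = starRingEnd ℂ (A k j)) ∧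
      (∀ z, (L z : ℂ) = ∑ j, ∑ k, A j k * z j * starRingEnd ℂ (z k)) ∧
      (∀ z, z ≠ 0 → 0 < L z))
    (hTaylor : ∃ C δ : ℝ, 0 < δ ∧ ∀ x₀ : ℝ, ∀ z : Fin n → ℂ, ‖(x₀, z)‖ < δ →
      |f (x₀, z) - (x₀ * ℓ (x₀, z) + 2 * (P z).re + L z)| ≤ C * ‖(x₀, z)‖ ^ 3) :
    ∃ U ∈ nhds (0 : ℂ × (Fin n → ℂ)), ∀ q ∈ U,
      f (q.1.re, q.2) < q.1.im →
      ((q.1 - 2 * Complex.I * P q.2).re = 0 → 0 < (q.1 - 2 * Complex.I * P q.2).im) ∧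
      q.1 - 2 * Complex.I * P q.2 ∉ {w : ℂ | w.re = 0 ∧ w.im ≤ 0} := by
  obtain ⟨cP, hcP⟩ := hP
  obtain ⟨A, hA1, hA2, hA3⟩ := hL
  obtain ⟨C0, δ, hδ, hT⟩ := hTaylor
  obtain ⟨K, hK0, hPb⟩ := P_bound P cP hcP
  have hcont : Continuous L := L_cont L A hA2
  have hhom : ∀ (t : ℝ) z, L (t • z) = t ^ 2 * L z := L_hom L A hA2
  obtain ⟨c, hc, hcz⟩ := quad_lower L hcont hhom hA3
  -- operator norm bound for ℓ
  obtain ⟨Nℓ, hNℓ0, hℓb⟩ : ∃ N : ℝ, 0 ≤ N ∧ ∀ p : ℝ × (Fin n → ℂ), |ℓ p| ≤ N * ‖p‖ := by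
    refine ⟨‖LinearMap.toContinuousLinearMap ℓ‖, norm_nonneg _, fun p => ?_⟩
    simpa [Real.norm_eq_abs] using (LinearMap.toContinuousLinearMap ℓ).le_opNorm p
  obtain ⟨C, hC0, hCC0⟩ : ∃ C : ℝ, 0 ≤ C ∧ C0 ≤ C := ⟨max C0 0, le_max_right _ _, le_max_left _ _⟩
  set B : ℝ := 2 * K * Nℓ + C with hB
  have hB0 : 0 ≤ B := by positivity
  set ε : ℝ := min δ (min ((2 * K + 1)⁻¹) (c / (B + 1))) with hε
  have hεpos : 0 < ε := by
    apply lt_min hδ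
    apply lt_min
    · positivity
    · positivity
  refine ⟨Metric.ball 0 ε, Metric.ball_mem_nhds 0 hεpos, fun q hq hM => ?_⟩
  have hqn : ‖q‖ < ε := mem_ball_zero_iff.mp hq
  set z₀ := q.1 with hz₀
  set z := q.2 with hz
  set x₀ := z₀.re with hx₀d
  set y₀ := z₀.im with hy₀d
  have hznorm : ‖z‖ < ε := lt_of_le_of_lt (norm_snd_le q) hqn
  have hz₀norm : ‖z₀‖ < ε := lt_of_le_of_lt (norm_fst_le q) hqn
  have key : (z₀ - 2 * Complex.I * P z).re = 0 → 0 < (z₀ - 2 * Complex.I * P z).im := by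
    intro hre
    have hre' : x₀ = -(2 * (P z).im) := by
      simp [Complex.sub_re, Complex.mul_re, Complex.I_re, Complex.I_im] at hre
      linarith
    set r : ℝ := ‖z‖ with hr
    have hr0 : 0 ≤ r := norm_nonneg _
    have hxb : |x₀| ≤ 2 * (K * r ^ 2) := by
      rw [hre', abs_neg, abs_mul]
      have h1 : |(P z).im| ≤ ‖P z‖ := Complex.abs_im_le_norm _
      have h2 : ‖P z‖ ≤ K * r ^ 2 := hPb z
      calc |(2:ℝ)| * |(P z).im| = 2 * |(P z).im| := by norm_num
        _ ≤ 2 * (K * r ^ 2) := by linarith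
    -- 2 K r ≤ 1 since r < ε ≤ (2K+1)⁻¹
    have hrK : r < (2 * K + 1)⁻¹ :=
      lt_of_lt_of_le hznorm (le_trans (min_le_right _ _) (min_le_left _ _))
    have h2Kr : 2 * K * r ≤ 1 := by
      have h2K1 : (0:ℝ) < 2 * K + 1 := by positivity
      have := (lt_div_iff₀ h2K1).mp (by rwa [inv_eq_one_div] at hrK)
      nlinarith
    have hxr : |x₀| ≤ r := by nlinarith [abs_nonneg x₀]
    set w : ℝ := ‖((x₀ : ℝ), z)‖ with hw
    have hw0 : 0 ≤ w := norm_nonneg _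
    have hwr : w ≤ r := by
      rw [hw, Prod.norm_def]
      exact max_le (by simpa [Real.norm_eq_abs] using hxr) le_rfl
    have hwδ : w < δ := lt_of_le_of_lt hwr (lt_of_lt_of_le hznorm (min_le_left _ _))
    have hTb := hT x₀ z hwδ
    have hTb' : |f (x₀, z) - (x₀ * ℓ (x₀, z) + 2 * (P z).re + L z)| ≤ C * w ^ 3 := by
      refine le_trans hTb ?_
      have : C0 ≤ C := hCC0
      have hw3 : (0:ℝ) ≤ w ^ 3 := by positivity
      nlinarith
    have hf1 : x₀ * ℓ (x₀, z) + 2 * (P z).re + L z - C * w ^ 3 ≤ f (x₀, z) := by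
      have := abs_le.mp hTb'
      linarith [this.1]
    have hℓ2 : |x₀ * ℓ (x₀, z)| ≤ 2 * K * Nℓ * r ^ 3 := by
      rw [abs_mul]
      have h1 := hℓb (x₀, z)
      have h2 : |x₀| * |ℓ (x₀, z)| ≤ (2 * (K * r ^ 2)) * (Nℓ * w) := by
        apply mul_le_mul hxb h1 (abs_nonneg _)
        positivity
      have h3 : (2 * (K * r ^ 2)) * (Nℓ * w) ≤ (2 * (K * r ^ 2)) * (Nℓ * r) := by
        apply mul_le_mul_of_nonneg_left _ (by positivity)
        exact mul_le_mul_of_nonneg_left hwr hNℓ0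
      calc |x₀| * |ℓ (x₀, z)| ≤ (2 * (K * r ^ 2)) * (Nℓ * r) := le_trans h2 h3
        _ = 2 * K * Nℓ * r ^ 3 := by ring
    have hLz : c * r ^ 2 ≤ L z := hcz z
    have hCw : C * w ^ 3 ≤ C * r ^ 3 := by
      apply mul_le_mul_of_nonneg_left _ hC0
      exact pow_le_pow_left₀ hw0 hwr 3
    -- B r ≤ c
    have hrB : r ≤ c / (B + 1) :=
      le_of_lt (lt_of_lt_of_le hznorm (le_trans (min_le_right _ _) (min_le_right _ _)))
    have hB1 : (0:ℝ) < B + 1 := by positivity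
    have hd : (c / (B + 1)) * (B + 1) = c := div_mul_cancel₀ c (ne_of_gt hB1)
    have hd0 : 0 ≤ c / (B + 1) := by positivity
    have hBr : B * r ≤ c := by nlinarith [mul_le_mul_of_nonneg_left hrB hB0]
    -- conclude
    have him : (z₀ - 2 * Complex.I * P z).im = y₀ - 2 * (P z).re := by
      simp [Complex.sub_im, Complex.mul_im, Complex.I_re, Complex.I_im]
      try ring
    rw [him]
    have habs := abs_le.mp hℓ2
    have hfy : f (x₀, z) < y₀ := hM
    have h7 : B * r ^ 3 ≤ c * r ^ 2 := by
      nlinarith [mul_le_mul_of_nonneg_left hBr (sq_nonneg r)]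
    have h8 : B * r ^ 3 = 2 * K * Nℓ * r ^ 3 + C * r ^ 3 := by rw [hB]; ring
    linarith [habs.1, h7, h8, hCw, hLz, hf1, hfy]
  refine ⟨key, fun hmem => ?_⟩
  exact absurd (key hmem.1) (not_lt.mpr hmem.2)
end

section
/- Vanishing of the argument in the denominator: suppose h : ℂⁿ → ℝ satisfies |h(ζ)| ≤ C|ζ|³, g(ζ) := f(h(ζ),ζ) satisfies |g(ζ) − |ζ|²| ≤ C|ζ|³, and a, b : ℝ≥0 × ℂⁿ → ℂⁿ are continuous (hence bounded near (0,0)). Define θ(s,ζ) = −(h(ζ) + s ζ·a(s,ζ)) / (g(ζ) + s + s ζ·b(s,ζ)) wherever the denominator is nonzero. Then θ(s,ζ) → 0 as (s,ζ) → (0,0) with s > 0, ζ ≠ 0. -/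
/-!
Near the origin `a` and `b` are bounded, so both pairings `ζ·a`, `ζ·b` are `O(|ζ|)`. Hence the
real part of the denominator is at least `(|ζ|² + s)/2`, while the numerator is at most
`C|ζ|³ + M s|ζ| ≤ (C + M)|ζ|(|ζ|² + s)`; so `|θ(s,ζ)| ≤ 2(C + M)|ζ|`, which tends to `0`.
-/

open Filter Topology

lemma EuclideanSpace.norm_sum_mul_le {𝕜 ι : Type*} [RCLike 𝕜] [Fintype ι]
    (ζ w : EuclideanSpace 𝕜 ι) : ‖∑ j, ζ j * w j‖ ≤ ‖ζ‖ * ‖w‖ := by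
  calc ‖∑ j, ζ j * w j‖ ≤ ∑ j, ‖ζ j‖ * ‖w j‖ := by
        simpa only [norm_mul] using norm_sum_le Finset.univ fun j => ζ j * w j
    _ ≤ ‖ζ‖ * ‖w‖ := by
        simpa only [EuclideanSpace.norm_eq] using
          Real.sum_mul_le_sqrt_mul_sqrt Finset.univ (fun j => ‖ζ j‖) fun j => ‖w j‖

lemma Complex.norm_div_le_of_norm_le_mul_re {N D : ℂ} {c : ℝ} (hD : 0 < D.re)
    (hN : ‖N‖ ≤ c * D.re) : ‖N / D‖ ≤ c := by
  have hc : 0 ≤ c := nonneg_of_mul_nonneg_left ((norm_nonneg N).trans hN) hD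
  rw [norm_div, div_le_iff₀ (hD.trans_le (re_le_norm D))]
  exact hN.trans (mul_le_mul_of_nonneg_left (re_le_norm D) hc)

section ThetaEstimate

variable {C M r s : ℝ}

lemma half_le_re_denominator {x : ℝ} {β : ℂ} (hs : 0 ≤ s)
    (hx : |x - r ^ 2| ≤ C * r ^ 3) (hβ : ‖β‖ ≤ M * r) (hCr : C * r ≤ 1 / 2)
    (hMr : M * r ≤ 1 / 2) : (r ^ 2 + s) / 2 ≤ ((x : ℂ) + s + s * β).re := by
  have hre : ((x : ℂ) + s + s * β).re = x + s + s * β.re := by simp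
  have hβre : -(M * r) ≤ β.re := (neg_le_neg hβ).trans (neg_le_of_abs_le β.abs_re_le_norm)
  have hxr : r ^ 2 / 2 ≤ x := by
    have : C * r ^ 3 ≤ r ^ 2 / 2 := by nlinarith [sq_nonneg r]
    linarith [neg_le_of_abs_le hx]
  rw [hre]
  nlinarith [mul_le_mul_of_nonneg_left hβre hs]

lemma norm_numerator_le {y : ℝ} {α : ℂ} (hC : 0 ≤ C) (hr : 0 ≤ r) (hs : 0 ≤ s)
    (hy : |y| ≤ C * r ^ 3) (hα : ‖α‖ ≤ M * r) :
    ‖(y : ℂ) + s * α‖ ≤ (C + M) * r * (r ^ 2 + s) := by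
  have hMr : 0 ≤ M * r := (norm_nonneg α).trans hα
  calc ‖(y : ℂ) + s * α‖ ≤ |y| + s * ‖α‖ := by
        simpa [Complex.norm_real, abs_of_nonneg hs] using norm_add_le (y : ℂ) (s * α)
    _ ≤ C * r ^ 3 + s * (M * r) := by gcongr
    _ ≤ (C + M) * r * (r ^ 2 + s) := by
        nlinarith [mul_nonneg (mul_nonneg hC hr) hs, mul_nonneg hMr (sq_nonneg r)]

lemma norm_theta_le {Mα : ℝ} {x y : ℝ} {α β : ℂ} (hC : 0 ≤ C) (hr : 0 < r) (hs : 0 ≤ s)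
    (hy : |y| ≤ C * r ^ 3) (hx : |x - r ^ 2| ≤ C * r ^ 3) (hα : ‖α‖ ≤ Mα * r)
    (hβ : ‖β‖ ≤ M * r) (hCr : C * r ≤ 1 / 2) (hMr : M * r ≤ 1 / 2) :
    ‖((y : ℂ) + s * α) / ((x : ℂ) + s + s * β)‖ ≤ 2 * (C + Mα) * r := by
  have hre := half_le_re_denominator hs hx hβ hCr hMr
  refine Complex.norm_div_le_of_norm_le_mul_re (lt_of_lt_of_le ?_ hre) ?_
  · have := pow_pos hr 2
    linarith
  calc ‖(y : ℂ) + s * α‖ ≤ (C + Mα) * r * (r ^ 2 + s) := norm_numerator_le hC hr.le hs hy hα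
    _ = 2 * (C + Mα) * r * ((r ^ 2 + s) / 2) := by ring
    _ ≤ 2 * (C + Mα) * r * ((x : ℂ) + s + s * β).re := by
        have : 0 ≤ C + Mα := by nlinarith [(norm_nonneg α).trans hα]
        gcongr

end ThetaEstimate

lemma Continuous.eventually_norm_lt {X E : Type*} [TopologicalSpace X] [SeminormedAddGroup E]
    {f : X → E} (hf : Continuous f) (x : X) : ∀ᶠ p in 𝓝 x, ‖f p‖ < ‖f x‖ + 1 :=
  (hf.norm.tendsto x).eventually_lt_const (lt_add_one _)

/-- Vanishing of the argument in the denominator: with `h(ζ) = O(|ζ|³)`,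
`g(ζ) = |ζ|² + O(|ζ|³)`, and continuous `a`, `b`, the quotient
`θ(s,ζ) = −(h(ζ) + s ζ·a(s,ζ)) / (g(ζ) + s + s ζ·b(s,ζ))` tends to `0` as
`(s,ζ) → (0,0)` with `s > 0`, `ζ ≠ 0`. -/
theorem theta_tendsto_zero {n : ℕ}
    (h : EuclideanSpace ℂ (Fin n) → ℝ) (g : EuclideanSpace ℂ (Fin n) → ℝ)
    (a b : ℝ × EuclideanSpace ℂ (Fin n) → EuclideanSpace ℂ (Fin n))
    (ha : Continuous a) (hb : Continuous b)
    (C δ : ℝ) (hδ : 0 < δ)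
    (hh : ∀ ζ : EuclideanSpace ℂ (Fin n), ‖ζ‖ < δ → |h ζ| ≤ C * ‖ζ‖ ^ 3)
    (hg : ∀ ζ : EuclideanSpace ℂ (Fin n), ‖ζ‖ < δ → |g ζ - ‖ζ‖ ^ 2| ≤ C * ‖ζ‖ ^ 3) :
    Tendsto
      (fun p : ℝ × EuclideanSpace ℂ (Fin n) =>
        -(((h p.2 : ℂ) + p.1 * ∑ j, p.2 j * a p j) /
          ((g p.2 : ℂ) + p.1 + p.1 * ∑ j, p.2 j * b p j)))
      (nhdsWithin (0, 0) {p : ℝ × EuclideanSpace ℂ (Fin n) | 0 < p.1 ∧ p.2 ≠ 0})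
      (nhds 0) := by
  set C' := max C 0
  set Ma := ‖a (0, 0)‖ + 1
  set Mb := ‖b (0, 0)‖ + 1
  have hζ : Tendsto (fun p : ℝ × EuclideanSpace ℂ (Fin n) => ‖p.2‖) (𝓝 (0, 0)) (𝓝 0) := by
    simpa using continuous_snd.norm.tendsto ((0, 0) : ℝ × EuclideanSpace ℂ (Fin n))
  have hsmall (c : ℝ) : ∀ᶠ p : ℝ × EuclideanSpace ℂ (Fin n) in 𝓝 (0, 0), c * ‖p.2‖ < 1 / 2 := by
    simpa using (hζ.const_mul c).eventually_lt_const (by norm_num : c * 0 < 1 / 2)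
  have hbound : ∀ᶠ p in 𝓝[{p | 0 < p.1 ∧ p.2 ≠ 0}] (0, 0),
      ‖-(((h p.2 : ℂ) + p.1 * ∑ j, p.2 j * a p j) /
          ((g p.2 : ℂ) + p.1 + p.1 * ∑ j, p.2 j * b p j))‖ ≤ 2 * (C' + Ma) * ‖p.2‖ := by
    filter_upwards [nhdsWithin_le_nhds (ha.eventually_norm_lt (0, 0)),
      nhdsWithin_le_nhds (hb.eventually_norm_lt (0, 0)), nhdsWithin_le_nhds (hsmall C'),
      nhdsWithin_le_nhds (hsmall Mb), nhdsWithin_le_nhds (hζ.eventually_lt_const hδ),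
      self_mem_nhdsWithin] with p haM hbM hCr hMr hζδ ⟨hs, hζ0⟩
    have hC : ∀ t : ℝ, 0 ≤ t → C * t ≤ C' * t := fun t ht =>
      mul_le_mul_of_nonneg_right (le_max_left C 0) ht
    rw [norm_neg]
    refine norm_theta_le (le_max_right C 0) (norm_pos_iff.mpr hζ0) hs.le
      ((hh _ hζδ).trans (hC _ (by positivity))) ((hg _ hζδ).trans (hC _ (by positivity)))
      ?_ ?_ hCr.le hMr.le
    · exact (EuclideanSpace.norm_sum_mul_le _ _).trans (by rw [mul_comm]; gcongr)
    · exact (EuclideanSpace.norm_sum_mul_le _ _).trans (by rw [mul_comm]; gcongr)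
  refine squeeze_zero_norm' hbound ?_
  simpa using (hζ.const_mul (2 * (C' + Ma))).mono_left nhdsWithin_le_nhds
end

section
/- A CR submanifold whose tangent bundle lies in the complex tangent bundle of a strongly pseudoconvex hypersurface is totally real: let S ⊂ ℂ^{n+1} be a smooth real hypersurface through 0 that is strongly pseudoconvex (its Levi form is positive definite on T^c(S)), and let N ⊂ S be a CR submanifold through 0 (i.e. dim_ℝ(T_p N ∩ i T_p N) is constant on N) with T_p N ⊂ T_p^c S = T_p S ∩ i T_p S for all p ∈ N. Then N is totally real (T_p N ∩ i T_p N = {0} for all p), and in particular dim_ℝ N ≤ n. -/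
open Complex

/-- Multiplication by `i`, viewed as an `ℝ`-linear endomorphism of `ℂ^N`. -/
noncomputable def Jstd (N : ℕ) :
    EuclideanSpace ℂ (Fin N) →ₗ[ℝ] EuclideanSpace ℂ (Fin N) :=
  (Complex.I • (LinearMap.id : EuclideanSpace ℂ (Fin N) →ₗ[ℂ] EuclideanSpace ℂ (Fin N))).restrictScalars ℝ

lemma Jstd_apply (N : ℕ) (v : EuclideanSpace ℂ (Fin N)) : Jstd N v = Complex.I • v := rfl

lemma Jstd_Jstd (N : ℕ) (v : EuclideanSpace ℂ (Fin N)) : Jstd N (Jstd N v) = -v := by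
  rw [Jstd_apply, Jstd_apply, smul_smul, Complex.I_mul_I, neg_one_smul]

lemma Jstd_injective (N : ℕ) : Function.Injective (Jstd N) := by
  intro x y h
  rw [Jstd_apply, Jstd_apply] at h
  exact smul_right_injective _ Complex.I_ne_zero h

set_option maxHeartbeats 2000000 in
/-- A CR submanifold (parametrized by an immersion `g`) of a strongly pseudoconvex
hypersurface `S = {ρ = 0} ⊂ ℂ^{n+1}`, whose tangent spaces lie in the complex
tangent bundle of `S`, is totally real; in particular its dimension is `≤ n`. -/
theorem cr_submanifold_totally_real {n m : ℕ}
    (ρ : EuclideanSpace ℂ (Fin (n + 1)) → ℝ) (hρ : ContDiff ℝ (⊤ : ℕ∞) ρ)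
    -- `S` is a smooth hypersurface: `dρ ≠ 0` on `S = {ρ = 0}`
    (hgrad : ∀ p, ρ p = 0 → fderiv ℝ ρ p ≠ 0)
    -- strong pseudoconvexity: the Levi form `¼(Hess ρ(v,v) + Hess ρ(Jv,Jv))` is
    -- positive on nonzero complex-tangential vectors
    (hspc : ∀ p, ρ p = 0 → ∀ v : EuclideanSpace ℂ (Fin (n + 1)), v ≠ 0 →
      fderiv ℝ ρ p v = 0 → fderiv ℝ ρ p (Jstd (n + 1) v) = 0 →
      0 < iteratedFDeriv ℝ 2 ρ p ![v, v] +
          iteratedFDeriv ℝ 2 ρ p ![Jstd (n + 1) v, Jstd (n + 1) v])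
    -- `N` is the image of a smooth immersion `g` with image in `S`
    (g : EuclideanSpace ℝ (Fin m) → EuclideanSpace ℂ (Fin (n + 1)))
    (hg : ContDiff ℝ (⊤ : ℕ∞) g)
    (hgS : ∀ x, ρ (g x) = 0)
    (himm : ∀ x, Function.Injective (fderiv ℝ g x))
    -- `N` is a CR submanifold: `dim (T_p N ∩ i T_p N)` is constant
    (hCR : ∃ k : ℕ, ∀ x, Module.finrank ℝ
      ↥(LinearMap.range (fderiv ℝ g x).toLinearMap ⊓
        Submodule.map (Jstd (n + 1)) (LinearMap.range (fderiv ℝ g x).toLinearMap)) = k)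
    -- tangency: `T_p N ⊂ T_p^c S`
    (htang : ∀ x v, fderiv ℝ ρ (g x) (fderiv ℝ g x v) = 0 ∧
      fderiv ℝ ρ (g x) (Jstd (n + 1) (fderiv ℝ g x v)) = 0) :
    (∀ x, LinearMap.range (fderiv ℝ g x).toLinearMap ⊓
      Submodule.map (Jstd (n + 1)) (LinearMap.range (fderiv ℝ g x).toLinearMap) = ⊥) ∧
    m ≤ n := by
  -- the continuous linear version of `Jstd`
  set Jc : EuclideanSpace ℂ (Fin (n + 1)) →L[ℝ] EuclideanSpace ℂ (Fin (n + 1)) := LinearMap.toContinuousLinearMap (Jstd (n + 1)) with hJcdef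
  have hJc : ∀ v : EuclideanSpace ℂ (Fin (n + 1)), Jc v = Jstd (n + 1) v := fun v => rfl
  have hgd : Differentiable ℝ g := hg.differentiable (by simp)
  have hdg : ContDiff ℝ (⊤ : ℕ∞) (fderiv ℝ g) := hg.fderiv_right (by simp)
  have hdρ : ContDiff ℝ (⊤ : ℕ∞) (fderiv ℝ ρ) := hρ.fderiv_right (by simp)
  -- the fundamental identity obtained by differentiating the tangency relation
  have key : ∀ (x : EuclideanSpace ℝ (Fin m)) (c d : EuclideanSpace ℝ (Fin m)),
      fderiv ℝ (fderiv ℝ ρ) (g x) (fderiv ℝ g x d) (Jc (fderiv ℝ g x c)) +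
        fderiv ℝ ρ (g x) (Jc (fderiv ℝ (fderiv ℝ g) x d c)) = 0 := by
    intro x c d
    set Φ : (EuclideanSpace ℝ (Fin m) →L[ℝ] EuclideanSpace ℂ (Fin (n + 1))) →L[ℝ] EuclideanSpace ℂ (Fin (n + 1)) := Jc.comp ((ContinuousLinearMap.apply ℝ (EuclideanSpace ℂ (Fin (n + 1)))) c) with hΦdef
    have hF : HasFDerivAt (fun y => fderiv ℝ ρ (g y))
        ((fderiv ℝ (fderiv ℝ ρ) (g x)).comp (fderiv ℝ g x)) x :=
      ((hdρ.differentiable (by simp) (g x)).hasFDerivAt).comp x (hgd x).hasFDerivAt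
    have hG : HasFDerivAt (fun y => Φ (fderiv ℝ g y))
        (Φ.comp (fderiv ℝ (fderiv ℝ g) x)) x :=
      Φ.hasFDerivAt.comp x (hdg.differentiable (by simp) x).hasFDerivAt
    have hφ := hF.clm_apply hG
    have hzero : (fun y => (fderiv ℝ ρ (g y)) (Φ (fderiv ℝ g y))) = fun _ => (0:ℝ) := by
      funext y
      have : Φ (fderiv ℝ g y) = Jc (fderiv ℝ g y c) := rfl
      rw [this, hJc]
      exact (htang y c).2
    rw [hzero] at hφ
    have hD := (hasFDerivAt_const (0:ℝ) x).unique hφ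
    have h := DFunLike.congr_fun hD d
    simp only [ContinuousLinearMap.zero_apply, ContinuousLinearMap.add_apply,
      ContinuousLinearMap.comp_apply, ContinuousLinearMap.flip_apply, hΦdef,
      ContinuousLinearMap.apply_apply] at h
    simp only [hJc] at h ⊢
    linarith
  -- symmetry of the second derivative of `g`
  have hsymg : ∀ (x : EuclideanSpace ℝ (Fin m)) (c d : EuclideanSpace ℝ (Fin m)),
      fderiv ℝ (fderiv ℝ g) x d c = fderiv ℝ (fderiv ℝ g) x c d := by
    intro x c d
    exact (hg.contDiffAt.isSymmSndFDerivAt (by rw [minSmoothness_of_isRCLikeNormedField]; exact WithTop.coe_le_coe.mpr le_top)) d c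
  -- hence the "Hessian against J" form is symmetric on tangent vectors
  have hsym : ∀ (x : EuclideanSpace ℝ (Fin m)) (c d : EuclideanSpace ℝ (Fin m)),
      fderiv ℝ (fderiv ℝ ρ) (g x) (fderiv ℝ g x d) (Jc (fderiv ℝ g x c)) =
      fderiv ℝ (fderiv ℝ ρ) (g x) (fderiv ℝ g x c) (Jc (fderiv ℝ g x d)) := by
    intro x c d
    have h1 := key x c d
    have h2 := key x d c
    rw [hsymg x d c] at h2
    linarith
  -- Part 1: total reality
  have part1 : ∀ x, LinearMap.range (fderiv ℝ g x).toLinearMap ⊓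
      Submodule.map (Jstd (n + 1)) (LinearMap.range (fderiv ℝ g x).toLinearMap) = ⊥ := by
    intro x
    rw [Submodule.eq_bot_iff]
    rintro v ⟨hv1, hv2⟩
    by_contra hv
    obtain ⟨a, ha⟩ := hv1
    obtain ⟨u, hu1, hu2⟩ := hv2
    obtain ⟨w, hw⟩ := hu1
    simp only [ContinuousLinearMap.coe_coe] at ha hw
    -- `Jstd v = fderiv g x (-w)`
    have hb : fderiv ℝ g x (-w) = Jstd (n + 1) v := by
      rw [map_neg, hw, ← hu2, Jstd_Jstd]
    set Hess := fderiv ℝ (fderiv ℝ ρ) (g x) with hHess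
    have hs := hsym x (-w) a
    rw [ha, hb] at hs
    -- LHS: Hess v (Jc (Jstd v)) = - Hess v v
    have hL : Hess v (Jc (Jstd (n + 1) v)) = -(Hess v v) := by
      rw [hJc, Jstd_Jstd]; exact map_neg _ v
    rw [hL] at hs
    -- RHS: Hess (Jstd v) (Jc v) = Hess (Jstd v) (Jstd v)
    rw [hJc] at hs
    -- strong pseudoconvexity at `g x`
    have h1 : fderiv ℝ ρ (g x) v = 0 := by rw [← ha]; exact (htang x a).1
    have h2 : fderiv ℝ ρ (g x) (Jstd (n + 1) v) = 0 := by rw [← ha]; exact (htang x a).2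
    have hpos := hspc (g x) (hgS x) v hv h1 h2
    rw [iteratedFDeriv_two_apply, iteratedFDeriv_two_apply] at hpos
    simp only [Matrix.cons_val_zero, Matrix.cons_val_one, Matrix.head_cons, ← hHess] at hpos
    linarith
  refine ⟨part1, ?_⟩
  -- Part 2: dimension bound, working at the point `g 0`
  classical
  set p := g 0 with hp
  set dgL : EuclideanSpace ℝ (Fin m) →ₗ[ℝ] EuclideanSpace ℂ (Fin (n + 1)) := (fderiv ℝ g 0).toLinearMap with hdgL
  set W : Submodule ℝ (EuclideanSpace ℂ (Fin (n + 1))) := LinearMap.range dgL with hW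
  set JW : Submodule ℝ (EuclideanSpace ℂ (Fin (n + 1))) := Submodule.map (Jstd (n + 1)) W with hJW
  set l1 : EuclideanSpace ℂ (Fin (n + 1)) →ₗ[ℝ] ℝ := (fderiv ℝ ρ p).toLinearMap with hl1
  set l2 : EuclideanSpace ℂ (Fin (n + 1)) →ₗ[ℝ] ℝ := l1.comp (Jstd (n + 1)) with hl2
  set Λ : EuclideanSpace ℂ (Fin (n + 1)) →ₗ[ℝ] ℝ × ℝ := l1.prod l2 with hΛ
  -- `Λ` is surjective
  have hne : ∃ u : EuclideanSpace ℂ (Fin (n + 1)), fderiv ℝ ρ p u ≠ 0 := by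
    by_contra h
    push_neg at h
    exact hgrad p (hgS 0) (ContinuousLinearMap.ext fun u => by simp [h u])
  obtain ⟨u, hu⟩ := hne
  have hΛsurj : Function.Surjective Λ := by
    rintro ⟨s, t⟩
    set a := fderiv ℝ ρ p u with hadef
    set b := fderiv ℝ ρ p (Jstd (n + 1) u) with hbdef
    have hab : a ^ 2 + b ^ 2 ≠ 0 := by positivity
    refine ⟨((s * a + t * b) / (a ^ 2 + b ^ 2)) • u +
            ((s * b - t * a) / (a ^ 2 + b ^ 2)) • (Jstd (n + 1) u), ?_⟩
    have e1 : l1 u = a := rfl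
    have e2 : l1 (Jstd (n + 1) u) = b := rfl
    have e3 : l2 u = b := rfl
    have e4 : l2 (Jstd (n + 1) u) = -a := by
      show l1 (Jstd (n + 1) (Jstd (n + 1) u)) = -a
      rw [Jstd_Jstd, map_neg, e1]
    have : Λ (((s * a + t * b) / (a ^ 2 + b ^ 2)) • u +
            ((s * b - t * a) / (a ^ 2 + b ^ 2)) • (Jstd (n + 1) u)) =
        (((s * a + t * b) / (a ^ 2 + b ^ 2)) * a + ((s * b - t * a) / (a ^ 2 + b ^ 2)) * b,
         ((s * a + t * b) / (a ^ 2 + b ^ 2)) * b + ((s * b - t * a) / (a ^ 2 + b ^ 2)) * (-a)) := by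
      simp [hΛ, LinearMap.prod_apply, map_add, map_smul, e1, e2, e3, e4,
        smul_eq_mul, Prod.mk_add_mk]
    rw [this]
    refine Prod.ext ?_ ?_ <;> · simp only; field_simp; ring
  -- dimensions
  have hEdim : Module.finrank ℝ (EuclideanSpace ℂ (Fin (n + 1))) = 2 * (n + 1) := by
    have h := Module.finrank_mul_finrank ℝ ℂ (EuclideanSpace ℂ (Fin (n + 1)))
    rw [Complex.finrank_real_complex, finrank_euclideanSpace_fin] at h
    omega
  have hkerdim : Module.finrank ℝ (LinearMap.ker Λ) = 2 * n := by
    have h := LinearMap.finrank_range_add_finrank_ker Λ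
    rw [LinearMap.range_eq_top.2 hΛsurj, finrank_top, hEdim] at h
    have h2 : Module.finrank ℝ (ℝ × ℝ) = 2 := by
      rw [Module.finrank_prod, Module.finrank_self]
    rw [h2] at h
    omega
  -- `W ⊔ JW ≤ ker Λ`
  have hsub : W ⊔ JW ≤ LinearMap.ker Λ := by
    have hmem : ∀ v, l1 v = 0 → l2 v = 0 → v ∈ LinearMap.ker Λ := by
      intro v h1 h2
      rw [LinearMap.mem_ker]
      have : Λ v = (l1 v, l2 v) := rfl
      rw [this, h1, h2]
      rfl
    refine sup_le ?_ ?_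
    · rintro v ⟨w, hw⟩
      refine hmem v ?_ ?_
      · show fderiv ℝ ρ (g 0) v = 0
        rw [← hw]; exact (htang 0 w).1
      · show fderiv ℝ ρ (g 0) (Jstd (n + 1) v) = 0
        rw [← hw]; exact (htang 0 w).2
    · rintro v ⟨z, ⟨w, hw⟩, hz⟩
      refine hmem v ?_ ?_
      · show fderiv ℝ ρ (g 0) v = 0
        rw [← hz, ← hw]; exact (htang 0 w).2
      · show fderiv ℝ ρ (g 0) (Jstd (n + 1) v) = 0
        rw [← hz, ← hw, Jstd_Jstd, map_neg, neg_eq_zero]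
        exact (htang 0 w).1
  have hWdim : Module.finrank ℝ W = m := by
    rw [hW, LinearMap.finrank_range_of_inj (by exact himm 0), finrank_euclideanSpace_fin]
  have hJWdim : Module.finrank ℝ JW = m := by
    have heq : JW = LinearMap.range ((Jstd (n + 1)).comp dgL) := by
      rw [LinearMap.range_comp]
    have hinj : Function.Injective ⇑((Jstd (n + 1)).comp dgL) := by
      rw [LinearMap.coe_comp]
      exact (Jstd_injective (n + 1)).comp (by exact himm 0)
    rw [heq, LinearMap.finrank_range_of_inj hinj, finrank_euclideanSpace_fin]
  have hinf : Module.finrank ℝ ↥(W ⊓ JW) = 0 := by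
    rw [hW, hJW]
    rw [show (LinearMap.range dgL ⊓ Submodule.map (Jstd (n+1)) (LinearMap.range dgL)) = ⊥
      from part1 0]
    exact finrank_bot ℝ (EuclideanSpace ℂ (Fin (n + 1)))
  have hsup := Submodule.finrank_sup_add_finrank_inf_eq W JW
  rw [hinf, hWdim, hJWdim] at hsup
  have hle : Module.finrank ℝ ↥(W ⊔ JW) ≤ Module.finrank ℝ (LinearMap.ker Λ) :=
    Submodule.finrank_mono hsub
  rw [hkerdim] at hle
  omega
end
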